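/- Let n ≥ 1 and let p_1,…,p_n, q_1,…,q_n, r_1,…,r_n be natural numbers with r_i ≥ 1 for all i. Then the abelianization of the group G_E(p,q,r) is isomorphic to ℤ if and only if exactly one of the two sums p_1 + ⋯ + p_n and q_1 + ⋯ + q_n equals 0. -/

import Mathlib

/-- The relators of the echinus group `G_E(p,q,r) = ⟨b_1,…,b_n, t | b_j^{2^{r_j}} = 1
(1 ≤ j ≤ n), b_i^{2^{p_i}} = b_{i+1}^{2^{q_i}} (1 ≤ i ≤ n−1),
t⁻¹ b_n^{2^{p_n}} t = b_1^{2^{q_n}}⟩`, where `some i` is `b_{i+1}` and `none` is `t`. -/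
def echinusRels (n : ℕ) (hn : 0 < n) (p q r : Fin n → ℕ) :
    Set (FreeGroup (Option (Fin n))) :=
  {x | ∃ j : Fin n, x = FreeGroup.of (some j) ^ 2 ^ r j} ∪
  {x | ∃ i j : Fin n, (i : ℕ) + 1 = (j : ℕ) ∧
      x = FreeGroup.of (some i) ^ 2 ^ p i * (FreeGroup.of (some j) ^ 2 ^ q i)⁻¹} ∪
  {(FreeGroup.of none)⁻¹ *
      FreeGroup.of (some ⟨n - 1, Nat.sub_lt hn Nat.one_pos⟩) ^
        2 ^ p ⟨n - 1, Nat.sub_lt hn Nat.one_pos⟩ *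
      FreeGroup.of none *
      (FreeGroup.of (some ⟨0, hn⟩) ^ 2 ^ q ⟨n - 1, Nat.sub_lt hn Nat.one_pos⟩)⁻¹}

/-!
In the abelianisation `A` of `G_E` the generator `t` only conjugates, so its relation becomes
`b_n^{2^{p_n}} = b_1^{2^{q_n}}` and `A ≅ ℤ` (generated by `t`) exactly when every `b_j` dies, the
`b_j` being torsion. If all `q_i` vanish, going once round the cycle gives `b = b^{2^{Σ p}}`,
which together with `b^{2^r} = 1` forces `b = 1` as soon as `Σ p ≠ 0`; symmetrically if all
`p_i` vanish. If `Σ p` and `Σ q` are both zero or both nonzero, a homomorphism `A → ℤ/2` that is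
nonzero on some `b_j` exists: in the first case `b_j ↦ 1` for all `j`; in the second, the
indicator of a run of consecutive `b_j` joined by edges with `p_i = q_i = 0`, entered through an
edge with `q_i ≠ 0` and left through an edge with `p_i ≠ 0`.
-/

namespace Fin

variable {n : ℕ} [NeZero n]

open Fin.NatCast in
theorem cyclic_induction {P : Fin n → Prop} (k₀ : Fin n) (h₀ : P k₀)
    (hsucc : ∀ k, P k → P (k + 1)) (k : Fin n) : P k := by
  have key : ∀ m : ℕ, P (k₀ + (m : Fin n)) := by
    intro m
    induction m with
    | zero => simpa using h₀
    | succ m ih => simpa [Nat.cast_succ, add_assoc] using hsucc _ ih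
  simpa using key (k - k₀).val

open Fin.NatCast in
theorem sum_range_natCast {M : Type*} [AddCommMonoid M] (g : Fin n → M) :
    ∑ j ∈ Finset.range n, g (j : Fin n) = ∑ i, g i := by
  simp [← Fin.sum_univ_eq_sum_range]

theorem add_one_eq_of_val_add_one_eq {i j : Fin n} (h : (i : ℕ) + 1 = j) : i + 1 = j :=
  Fin.ext <| by rw [Fin.val_add_one_of_lt' (h ▸ j.isLt), h]

theorem mk_sub_one_add_one (hn : 0 < n) :
    (⟨n - 1, Nat.sub_lt hn Nat.one_pos⟩ : Fin n) + 1 = ⟨0, hn⟩ :=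
  Fin.ext <| by simp [Fin.val_add, Nat.sub_add_cancel hn]

end Fin

section PowTwoPow

variable {G : Type*} [Monoid G]

theorem pow_two_pow_sum_of_succ {f : ℕ → G} {c : ℕ → ℕ}
    (h : ∀ k, f (k + 1) = f k ^ 2 ^ c k) (k : ℕ) :
    f k = f 0 ^ 2 ^ ∑ j ∈ Finset.range k, c j := by
  induction k with
  | zero => simp
  | succ k ih => rw [h, ih, ← pow_mul, ← pow_add, Finset.sum_range_succ]

theorem eq_one_of_pow_two_pow_eq_self {x : G} {s r : ℕ} (hs : s ≠ 0) (hx : x ^ 2 ^ s = x)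
    (hr : x ^ 2 ^ r = 1) : x = 1 := by
  have hiter : ∀ k, x ^ 2 ^ (s * k) = x := by
    intro k
    induction k with
    | zero => simp
    | succ k ih => rw [mul_add_one, pow_add, pow_mul, ih, hx]
  have hrs : r ≤ s * r := Nat.le_mul_of_pos_left r (Nat.pos_of_ne_zero hs)
  calc x = x ^ 2 ^ (s * r) := (hiter r).symm
    _ = (x ^ 2 ^ r) ^ 2 ^ (s * r - r) := by rw [← pow_mul, ← pow_add, Nat.add_sub_cancel' hrs]
    _ = 1 := by rw [hr, one_pow]

end PowTwoPow

/-- The relations satisfied by the images of `b_1, …, b_n` in the abelianisation of `G_E`, with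
indices read cyclically: for `i = n - 1` the last relation is the image of the one involving `t`. -/
structure EchinusRelations {G : Type*} [Monoid G] {n : ℕ} [NeZero n] (p q r : Fin n → ℕ)
    (x : Fin n → G) : Prop where
  pow_two_pow_r : ∀ j, x j ^ 2 ^ r j = 1
  pow_two_pow_p : ∀ i, x i ^ 2 ^ p i = x (i + 1) ^ 2 ^ q i

namespace EchinusRelations

variable {G : Type*} [Monoid G] {n : ℕ} [NeZero n] {p q r : Fin n → ℕ} {x : Fin n → G}

open Fin.NatCast in
theorem pow_two_pow_sum_p (hx : EchinusRelations p q r x) (hq : ∀ i, q i = 0) (i₀ : Fin n) :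
    x i₀ ^ 2 ^ ∑ i, p i = x i₀ := by
  have key := pow_two_pow_sum_of_succ (f := fun k : ℕ ↦ x (i₀ + (k : Fin n)))
    (c := fun j ↦ p (i₀ + (j : Fin n)))
    (fun k ↦ by simpa [hq, add_assoc] using (hx.pow_two_pow_p (i₀ + (k : Fin n))).symm) n
  simp only [Fin.natCast_self, add_zero, Nat.cast_zero, Fin.sum_range_natCast (p <| i₀ + ·)] at key
  rwa [Fintype.sum_equiv (Equiv.addLeft i₀) (fun i ↦ p (i₀ + i)) p fun _ ↦ rfl, eq_comm] at key

open Fin.NatCast in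
theorem pow_two_pow_sum_q (hx : EchinusRelations p q r x) (hp : ∀ i, p i = 0) (i₀ : Fin n) :
    x i₀ ^ 2 ^ ∑ i, q i = x i₀ := by
  have key := pow_two_pow_sum_of_succ (f := fun k : ℕ ↦ x (i₀ - (k : Fin n)))
    (c := fun j ↦ q (i₀ - 1 - (j : Fin n)))
    (fun k ↦ by
      simpa [hp, sub_add_eq_sub_sub, sub_right_comm _ (1 : Fin n)]
        using hx.pow_two_pow_p (i₀ - 1 - (k : Fin n))) n
  simp only [Fin.natCast_self, sub_zero, Nat.cast_zero,
    Fin.sum_range_natCast (q <| i₀ - 1 - ·)] at key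
  rwa [Fintype.sum_equiv (Equiv.subLeft (i₀ - 1)) (fun i ↦ q (i₀ - 1 - i)) q fun _ ↦ rfl,
    eq_comm] at key

theorem eq_one (hx : EchinusRelations p q r x)
    (hpq : (∑ i, p i = 0 ∧ ∑ i, q i ≠ 0) ∨ (∑ i, p i ≠ 0 ∧ ∑ i, q i = 0)) (j : Fin n) :
    x j = 1 := by
  rcases hpq with ⟨hp, hq⟩ | ⟨hp, hq⟩
  · rw [Finset.sum_eq_zero_iff] at hp
    exact eq_one_of_pow_two_pow_eq_self hq (hx.pow_two_pow_sum_q (by simpa using hp) j)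
      (hx.pow_two_pow_r j)
  · rw [Finset.sum_eq_zero_iff] at hq
    exact eq_one_of_pow_two_pow_eq_self hp (hx.pow_two_pow_sum_p (by simpa using hq) j)
      (hx.pow_two_pow_r j)

end EchinusRelations

theorem ZMod.two_pow_nsmul (k : ℕ) (e : ZMod 2) : 2 ^ k • e = if k = 0 then e else 0 := by
  split_ifs with hk
  · simp [hk]
  · rw [nsmul_eq_mul, Nat.cast_pow, Nat.cast_ofNat, show (2 : ZMod 2) = 0 from rfl, zero_pow hk,
      zero_mul]

section ZModTwoSolution

variable {n : ℕ} [NeZero n] (p q : Fin n → ℕ)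

/- Think of `i : Fin n` as an edge from vertex `i` to vertex `i + 1` labelled `(p i, q i)`.
`ReachedFromQ p q k`: vertex `k` is reached from an edge with `q ≠ 0` by moving forward along
edges labelled `(0, 0)`; `ReachesP p q k`: from `k` one reaches an edge with `p ≠ 0` in the
same way. -/
inductive ReachedFromQ : Fin n → Prop
  | of_q_ne_zero {k : Fin n} : q (k - 1) ≠ 0 → ReachedFromQ k
  | step {k : Fin n} : p (k - 1) = 0 → q (k - 1) = 0 → ReachedFromQ (k - 1) → ReachedFromQ k

inductive ReachesP : Fin n → Prop
  | of_p_ne_zero {k : Fin n} : p k ≠ 0 → ReachesP k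
  | step {k : Fin n} : p k = 0 → q k = 0 → ReachesP (k + 1) → ReachesP k

open Classical in
noncomputable def zmodTwoSolution (k : Fin n) : ZMod 2 :=
  if ReachedFromQ p q k ∧ ReachesP p q k then 1 else 0

variable {p q}

theorem reachedFromQ_add_one_iff {k : Fin n} :
    ReachedFromQ p q (k + 1) ↔ q k ≠ 0 ∨ p k = 0 ∧ q k = 0 ∧ ReachedFromQ p q k := by
  constructor
  · rintro (h | ⟨hp, hq, h⟩) <;> simp_all
  · rintro (h | ⟨hp, hq, h⟩)
    · exact .of_q_ne_zero (by simpa using h)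
    · exact .step (by simpa using hp) (by simpa using hq) (by simpa using h)

theorem reachesP_iff {k : Fin n} :
    ReachesP p q k ↔ p k ≠ 0 ∨ p k = 0 ∧ q k = 0 ∧ ReachesP p q (k + 1) := by
  constructor
  · rintro (h | ⟨hp, hq, h⟩) <;> simp_all
  · rintro (h | ⟨hp, hq, h⟩)
    exacts [.of_p_ne_zero h, .step hp hq h]

theorem exists_reachedFromQ_and_reachesP (hp : ∃ i, p i ≠ 0) (hq : ∃ i, q i ≠ 0) :
    ∃ k, ReachedFromQ p q k ∧ ReachesP p q k := by
  obtain ⟨i, hi⟩ := hp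
  obtain ⟨j, hj⟩ := hq
  by_contra! hdisj
  -- Without such a vertex, `ReachedFromQ` propagates along every edge, hence all the way round.
  have hall : ∀ k, ReachedFromQ p q k := by
    refine Fin.cyclic_induction (j + 1) (reachedFromQ_add_one_iff.2 (.inl hj)) fun k hk ↦ ?_
    have hpk : p k = 0 := by_contra fun h ↦ hdisj k hk (.of_p_ne_zero h)
    rw [reachedFromQ_add_one_iff]
    tauto
  exact hdisj i (hall i) (.of_p_ne_zero hi)

theorem two_pow_nsmul_zmodTwoSolution (k : Fin n) :
    2 ^ p k • zmodTwoSolution p q k = 2 ^ q k • zmodTwoSolution p q (k + 1) := by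
  simp only [ZMod.two_pow_nsmul, zmodTwoSolution]
  rw [reachesP_iff (k := k), reachedFromQ_add_one_iff]
  split_ifs <;> simp_all

theorem exists_ne_zero_zmodTwo_of_sum_eq_zero_iff (hpq : ∑ i, p i = 0 ↔ ∑ i, q i = 0) :
    ∃ ε : Fin n → ZMod 2, ε ≠ 0 ∧ ∀ k, 2 ^ p k • ε k = 2 ^ q k • ε (k + 1) := by
  by_cases hp : ∑ i, p i = 0
  · have hq := hpq.1 hp
    simp only [Finset.sum_eq_zero_iff, Finset.mem_univ, true_implies] at hp hq
    exact ⟨1, one_ne_zero, fun k ↦ by simp [hp k, hq k]⟩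
  · obtain ⟨i, -, hi⟩ := Finset.exists_ne_zero_of_sum_ne_zero hp
    obtain ⟨j, -, hj⟩ := Finset.exists_ne_zero_of_sum_ne_zero (hpq.not.1 hp)
    obtain ⟨k, hk⟩ := exists_reachedFromQ_and_reachesP ⟨i, hi⟩ ⟨j, hj⟩
    refine ⟨zmodTwoSolution p q, fun h ↦ ?_, two_pow_nsmul_zmodTwoSolution⟩
    simpa [zmodTwoSolution, hk] using congrFun h k

theorem exists_ne_one_echinusRelations_of_sum_eq_zero_iff {r : Fin n → ℕ} (hr : ∀ i, 1 ≤ r i)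
    (hpq : ∑ i, p i = 0 ↔ ∑ i, q i = 0) :
    ∃ x : Fin n → Multiplicative (ZMod 2), x ≠ 1 ∧ EchinusRelations p q r x := by
  obtain ⟨ε, hε0, hε⟩ := exists_ne_zero_zmodTwo_of_sum_eq_zero_iff hpq
  refine ⟨fun j ↦ .ofAdd (ε j),
    fun h ↦ hε0 (funext fun j ↦ congrArg Multiplicative.toAdd (congrFun h j)),
    fun j ↦ ?_, fun i ↦ ?_⟩
  · rw [← ofAdd_nsmul, ZMod.two_pow_nsmul, if_neg (Nat.one_le_iff_ne_zero.1 (hr j)), ofAdd_zero]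
  · rw [← ofAdd_nsmul, ← ofAdd_nsmul, hε i]

end ZModTwoSolution

abbrev EchinusGroup (n : ℕ) (hn : 0 < n) (p q r : Fin n → ℕ) : Type :=
  PresentedGroup (echinusRels n hn p q r)

namespace EchinusGroup

open PresentedGroup

variable {n : ℕ} {hn : 0 < n} {p q r : Fin n → ℕ}

theorem of_pow_two_pow_r (j : Fin n) : (of (some j) : EchinusGroup n hn p q r) ^ 2 ^ r j = 1 :=
  (map_pow (mk _) _ _).symm.trans (one_of_mem (.inl (.inl ⟨j, rfl⟩)))

theorem of_pow_two_pow_p {i j : Fin n} (hij : (i : ℕ) + 1 = j) :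
    (of (some i) : EchinusGroup n hn p q r) ^ 2 ^ p i = of (some j) ^ 2 ^ q i := by
  have h := mk_eq_mk_of_mul_inv_mem (rels := echinusRels n hn p q r)
    (.inl (.inr ⟨i, j, hij, rfl⟩))
  rwa [map_pow, map_pow] at h

theorem of_none_conj :
    (of none : EchinusGroup n hn p q r)⁻¹ *
        of (some ⟨n - 1, Nat.sub_lt hn Nat.one_pos⟩) ^ 2 ^ p ⟨n - 1, Nat.sub_lt hn Nat.one_pos⟩ *
        of none =
      of (some ⟨0, hn⟩) ^ 2 ^ q ⟨n - 1, Nat.sub_lt hn Nat.one_pos⟩ := by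
  have h := mk_eq_mk_of_mul_inv_mem (rels := echinusRels n hn p q r) (.inr rfl)
  rwa [map_mul, map_mul, map_inv, map_pow, map_pow] at h

variable (n hn p q r) in
def b (j : Fin n) : Abelianization (EchinusGroup n hn p q r) :=
  Abelianization.of (of (some j))

theorem b_pow_two_pow_r (j : Fin n) : b n hn p q r j ^ 2 ^ r j = 1 := by
  rw [b, ← map_pow, of_pow_two_pow_r, map_one]

theorem echinusRelations_b [NeZero n] : EchinusRelations p q r (b n hn p q r) := by
  refine ⟨b_pow_two_pow_r, fun i ↦ ?_⟩
  rcases Nat.lt_or_ge ((i : ℕ) + 1) n with hi | hi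
  · rw [Fin.add_one_eq_of_val_add_one_eq (j := ⟨i + 1, hi⟩) rfl, b, b, ← map_pow, ← map_pow,
      of_pow_two_pow_p (j := ⟨i + 1, hi⟩) rfl]
  · obtain rfl : i = ⟨n - 1, Nat.sub_lt hn Nat.one_pos⟩ := Fin.ext (show (i : ℕ) = n - 1 by omega)
    rw [Fin.mk_sub_one_add_one hn, b, b, ← map_pow, ← map_pow, ← of_none_conj, map_mul, map_mul,
      map_inv, mul_right_comm, inv_mul_cancel, one_mul]

theorem exists_lift {G : Type*} [CommGroup G] [NeZero n] {x : Fin n → G}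
    (hx : EchinusRelations p q r x) :
    ∃ f : Abelianization (EchinusGroup n hn p q r) →* G, ∀ j, f (b n hn p q r j) = x j := by
  have hrels : ∀ w ∈ echinusRels n hn p q r, FreeGroup.lift (fun a ↦ a.elim 1 x) w = 1 := by
    rintro _ ((⟨j, rfl⟩ | ⟨i, j, hij, rfl⟩) | rfl)
    · simpa using hx.pow_two_pow_r j
    · simpa [← Fin.add_one_eq_of_val_add_one_eq hij, mul_inv_eq_one] using hx.pow_two_pow_p i
    · simpa [← Fin.mk_sub_one_add_one hn, mul_inv_eq_one] using hx.pow_two_pow_p _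
  exact ⟨Abelianization.lift (toGroup hrels), fun j ↦ by simp [b]⟩

theorem nonempty_mulEquiv_int_iff :
    Nonempty (Abelianization (EchinusGroup n hn p q r) ≃* Multiplicative ℤ) ↔
      ∀ j, b n hn p q r j = 1 := by
  constructor
  · rintro ⟨e⟩ j
    have h := congrArg e (b_pow_two_pow_r j)
    rw [map_pow, map_one, pow_eq_one_iff_left (pow_ne_zero _ two_ne_zero)] at h
    exact e.injective (h.trans (map_one e).symm)
  · intro hb
    let t : Abelianization (EchinusGroup n hn p q r) := Abelianization.of (of none)
    let φ : Abelianization (EchinusGroup n hn p q r) →* Multiplicative ℤ :=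
      Abelianization.lift (toGroup (f := fun a ↦ a.elim (.ofAdd 1) fun _ ↦ 1)
        (by rintro _ ((⟨j, rfl⟩ | ⟨i, j, -, rfl⟩) | rfl) <;> simp))
    have hφt : φ t = .ofAdd 1 := by simp [φ, t]
    refine ⟨MonoidHom.toMulEquiv φ (zpowersHom _ t) ?_ ?_⟩
    · refine Abelianization.hom_ext _ _ (PresentedGroup.ext fun a ↦ ?_)
      cases a with
      | none => simp [hφt, t]
      | some j => simpa [φ, b] using (hb j).symm
    · exact MonoidHom.ext_mint (by simp [hφt])

end EchinusGroup

theorem stmt9 (n : ℕ) (hn : 0 < n) (p q r : Fin n → ℕ) (hr : ∀ i, 1 ≤ r i) :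
    Nonempty (Abelianization (PresentedGroup (echinusRels n hn p q r)) ≃* Multiplicative ℤ) ↔
      ((∑ i, p i = 0 ∧ ∑ i, q i ≠ 0) ∨ (∑ i, p i ≠ 0 ∧ ∑ i, q i = 0)) := by
  have : NeZero n := ⟨hn.ne'⟩
  rw [EchinusGroup.nonempty_mulEquiv_int_iff]
  refine ⟨fun hb ↦ ?_, EchinusGroup.echinusRelations_b.eq_one⟩
  by_contra hpq
  obtain ⟨x, hx1, hx⟩ :=
    exists_ne_one_echinusRelations_of_sum_eq_zero_iff (p := p) (q := q) hr (by tauto)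
  obtain ⟨f, hf⟩ := EchinusGroup.exists_lift (hn := hn) hx
  exact hx1 (funext fun j ↦ by rw [← hf j, hb j, map_one, Pi.one_apply])
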